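/- Let U ⊆ E be a subspace and S : U → U⊥ a linear map, and let Γ_S := { u + S u : u ∈ U } ⊆ E be its graph. Then δ(Γ_S, U) = ‖S‖ (1 + ‖S‖²)^{−1/2}. -/

import Mathlib

open Module Submodule

noncomputable section

variable {E : Type*} [NormedAddCommGroup E] [InnerProductSpace ℝ E] [FiniteDimensional ℝ E]

/-- The orthogonal projection onto a subspace `U`, viewed as a continuous linear
endomorphism of `E`. -/
noncomputable def projCLM (U : Submodule ℝ E) : E →L[ℝ] E :=
  U.subtypeL.comp (orthogonalProjection U)

/-- The gap `δ(U,V) := ‖P_U - P_V ∘ P_U‖` between two subspaces. -/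
noncomputable def gap (U V : Submodule ℝ E) : ℝ :=
  ‖projCLM U - (projCLM V).comp (projCLM U)‖

/-! The gap `δ(V, U)` is the norm of `P_{U⊥}` restricted to `V`. On the graph of `S` one has
`P_{U⊥} (u + S u) = S u` and `‖u + S u‖² = ‖u‖² + ‖S u‖²`, so the gap is the supremum of
`‖S u‖ / √(‖u‖² + ‖S u‖²) = f (‖S u‖ / ‖u‖)` with `f t = t / √(1 + t²)` increasing; hence it
equals `f ‖S‖`. -/

section RestrictionNorm

variable {𝕜 F G : Type*} [RCLike 𝕜] [NormedAddCommGroup F] [InnerProductSpace 𝕜 F]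
  [SeminormedAddCommGroup G] [NormedSpace 𝕜 G]

theorem norm_comp_starProjection (A : F →L[𝕜] G) (V : Submodule 𝕜 F)
    [V.HasOrthogonalProjection] : ‖A ∘L V.starProjection‖ = ‖A ∘L V.subtypeL‖ := by
  refine le_antisymm ?_ ?_
  · calc ‖A ∘L V.starProjection‖
        = ‖(A ∘L V.subtypeL) ∘L V.orthogonalProjectionOnto‖ := rfl
      _ ≤ ‖A ∘L V.subtypeL‖ * ‖V.orthogonalProjectionOnto‖ :=
          ContinuousLinearMap.opNorm_comp_le _ _
      _ ≤ ‖A ∘L V.subtypeL‖ := mul_le_of_le_one_right (norm_nonneg _)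
          (orthogonalProjectionOnto_norm_le V)
  · have h : A ∘L V.subtypeL = (A ∘L V.starProjection) ∘L V.subtypeL := by
      ext v
      simp [starProjection_eq_self_iff.2 v.2]
    calc ‖A ∘L V.subtypeL‖ = ‖(A ∘L V.starProjection) ∘L V.subtypeL‖ := by rw [← h]
      _ ≤ ‖A ∘L V.starProjection‖ * ‖V.subtypeL‖ :=
          ContinuousLinearMap.opNorm_comp_le _ _
      _ ≤ ‖A ∘L V.starProjection‖ := mul_le_of_le_one_right (norm_nonneg _)
          (norm_subtypeL_le V)

end RestrictionNorm

theorem gap_eq_norm_starProjection_orthogonal_comp_subtypeL (V U : Submodule ℝ E) :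
    gap V U = ‖Uᗮ.starProjection ∘L V.subtypeL‖ := by
  rw [← norm_comp_starProjection, starProjection_orthogonal, ContinuousLinearMap.sub_comp,
    ContinuousLinearMap.id_comp]
  rfl

section Graph

variable {F : Type*} [NormedAddCommGroup F] [InnerProductSpace ℝ F]
  (U : Submodule ℝ F) (S : U →L[ℝ] Uᗮ)

def graphMap : U →L[ℝ] F := U.subtypeL + Uᗮ.subtypeL ∘L S

theorem graphMap_apply (u : U) : graphMap U S u = u + S u := rfl

theorem norm_graphMap_apply (u : U) : ‖graphMap U S u‖ = √(‖u‖ ^ 2 + ‖S u‖ ^ 2) := by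
  rw [graphMap_apply, norm_add_eq_sqrt_iff_real_inner_eq_zero.2
    (inner_right_of_mem_orthogonal u.2 (S u).2)]
  simp only [sq, norm_coe]

theorem norm_graphMap_apply_le (u : U) : ‖graphMap U S u‖ ≤ √(1 + ‖S‖ ^ 2) * ‖u‖ := by
  have hSu : ‖S u‖ ≤ ‖S‖ * ‖u‖ := S.le_opNorm u
  rw [← pow_le_pow_iff_left₀ (norm_nonneg _) (by positivity) two_ne_zero, mul_pow,
    Real.sq_sqrt (by positivity), norm_graphMap_apply, Real.sq_sqrt (by positivity)]
  nlinarith [norm_nonneg (S u)]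

theorem norm_apply_mul_sqrt_one_add_sq_le (u : U) :
    ‖S u‖ * √(1 + ‖S‖ ^ 2) ≤ ‖S‖ * ‖graphMap U S u‖ := by
  have hSu : ‖S u‖ ≤ ‖S‖ * ‖u‖ := S.le_opNorm u
  rw [← pow_le_pow_iff_left₀ (by positivity) (by positivity) two_ne_zero, mul_pow, mul_pow,
    Real.sq_sqrt (by positivity), norm_graphMap_apply, Real.sq_sqrt (by positivity)]
  nlinarith [norm_nonneg (S u)]

theorem starProjection_orthogonal_graphMap_apply [U.HasOrthogonalProjection] (u : U) :
    Uᗮ.starProjection (graphMap U S u) = S u :=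
  eq_starProjection_of_mem_orthogonal' (S u).2 (le_orthogonal_orthogonal U u.2) (add_comm _ _)

theorem norm_starProjection_orthogonal_comp_subtypeL_range_graphMap
    [U.HasOrthogonalProjection] :
    ‖Uᗮ.starProjection ∘L (LinearMap.range (graphMap U S : U →ₗ[ℝ] F)).subtypeL‖
      = ‖S‖ / √(1 + ‖S‖ ^ 2) := by
  set R := Uᗮ.starProjection ∘L (LinearMap.range (graphMap U S : U →ₗ[ℝ] F)).subtypeL
  have hR : ∀ u, R ⟨graphMap U S u, LinearMap.mem_range_self _ u⟩ = S u :=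
    starProjection_orthogonal_graphMap_apply U S
  have hpos : 0 < √(1 + ‖S‖ ^ 2) := Real.sqrt_pos.2 (by positivity)
  refine le_antisymm ?_ ?_
  · refine R.opNorm_le_bound (by positivity) ?_
    rintro ⟨v, hv⟩
    obtain ⟨u, rfl⟩ := LinearMap.mem_range.1 hv
    rw [show R ⟨_, hv⟩ = S u from hR u, div_mul_eq_mul_div, le_div_iff₀ hpos, norm_coe]
    exact norm_apply_mul_sqrt_one_add_sq_le U S u
  · rw [div_le_iff₀ hpos]
    refine S.opNorm_le_bound (by positivity) fun u ↦ ?_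
    calc ‖S u‖ = ‖R ⟨graphMap U S u, LinearMap.mem_range_self _ u⟩‖ := by rw [hR, norm_coe]
      _ ≤ ‖R‖ * ‖graphMap U S u‖ := R.le_opNorm _
      _ ≤ ‖R‖ * (√(1 + ‖S‖ ^ 2) * ‖u‖) := by gcongr; exact norm_graphMap_apply_le U S u
      _ = ‖R‖ * √(1 + ‖S‖ ^ 2) * ‖u‖ := by ring

end Graph

/-- For a subspace `U ⊆ E` and a linear map `S : U → U⊥` with graph
`Γ_S = {u + S u : u ∈ U}`, one has `δ(Γ_S, U) = ‖S‖ (1 + ‖S‖²)^{-1/2}`. -/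
theorem gap_graph (U : Submodule ℝ E) (S : ↥U →L[ℝ] ↥Uᗮ) :
    gap (LinearMap.range ((U.subtypeL + Uᗮ.subtypeL.comp S : ↥U →L[ℝ] E) : ↥U →ₗ[ℝ] E)) U
      = ‖S‖ / Real.sqrt (1 + ‖S‖ ^ 2) := by
  rw [gap_eq_norm_starProjection_orthogonal_comp_subtypeL]
  exact norm_starProjection_orthogonal_comp_subtypeL_range_graphMap U S
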